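/- If P_k(n̂) := P_{k(n)}(n, n̂) ≥ Q(n, n̂) for all unit n̂ (with P, Q as in the stability lemma), then for all nonzero h, ĥ with n = −h^⊥/|h|, n̂ = −ĥ^⊥/|ĥ|: (1/|h|)(Z_k(n)ĥ)·(ĥ − h) ≥ |ĥ|γ(n̂) − |h|γ(n) = γ(−ĥ^⊥) − γ(−h^⊥). -/

import Mathlib

/-!
Write `h = |h| n^⊥` and `ĥ = |ĥ| n̂^⊥`. Euler's identity `∇γ(n)·n = γ(n)` and the expansion of
vectors in the orthonormal frames `(n, n^⊥)` and `(n̂, n̂^⊥)` turn `(1/|h|)(Z_k(n)ĥ)·(ĥ − h)` into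
`(|ĥ|²/|h|) B − |ĥ| ∇γ(n)·n̂`, where `P = 2√(B γ(n))`. AM–GM gives
`(|ĥ|²/|h|) B ≥ |ĥ| P − |h| γ(n)`, and `P ≥ Q` finishes.

Since `√` of a negative number is `0`, `B ≥ 0` has to be derived: `P` is even in `n̂` while
`Q(n, n̂) + Q(n, −n̂) = γ(n̂) + γ(−n̂) > 0`, so `P ≥ Q` at `±n̂` forces `P > 0`.
-/
open scoped RealInnerProductSpace
noncomputable section
abbrev E := EuclideanSpace ℝ (Fin 2)
def toE (v : Fin 2 → ℝ) : E := (WithLp.equiv 2 (Fin 2 → ℝ)).symm v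
def toV (p : E) : Fin 2 → ℝ := fun i => p i
/-- clockwise rotation by π/2 : (a,b)^⊥ = (b,-a) -/
def perp (p : E) : E := toE ![p 1, -(p 0)]

/-- symmetrized surface energy matrix Z_k(n) = γ(n)I₂ − n∇γ(n)ᵀ − ∇γ(n)nᵀ + k nnᵀ -/
def Zmat (γ : E → ℝ) (k : ℝ) (n : E) : Matrix (Fin 2) (Fin 2) ℝ :=
  γ n • (1 : Matrix (Fin 2) (Fin 2) ℝ)
    - Matrix.vecMulVec (toV n) (toV (gradient γ n))
    - Matrix.vecMulVec (toV (gradient γ n)) (toV n)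
    + k • Matrix.vecMulVec (toV n) (toV n)

def Paux (γ : E → ℝ) (α : ℝ) (n nh : E) : ℝ :=
  2 * Real.sqrt ((-γ n + 2 * ⟪n, nh⟫ * ⟪gradient γ n, nh⟫ + α * ⟪nh, perp n⟫ ^ 2) * γ n)
def Qaux (γ : E → ℝ) (n nh : E) : ℝ := γ nh + ⟪gradient γ n, nh⟫

lemma inner_fin_two (x y : E) : ⟪x, y⟫ = x 0 * y 0 + x 1 * y 1 := by
  simp only [PiLp.inner_apply, Fin.sum_univ_two, RCLike.inner_apply, conj_trivial]
  ring

@[simp] lemma perp_apply_zero (p : E) : perp p 0 = p 1 := by simp [perp, toE]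
@[simp] lemma perp_apply_one (p : E) : perp p 1 = -p 0 := by simp [perp, toE]

lemma perp_neg (p : E) : perp (-p) = -perp p := by
  ext i; fin_cases i <;> simp

lemma perp_smul (c : ℝ) (p : E) : perp (c • p) = c • perp p := by
  ext i; fin_cases i <;> simp

lemma perp_perp (p : E) : perp (perp p) = -p := by
  ext i; fin_cases i <;> simp

lemma inner_perp_perp (x y : E) : ⟪perp x, perp y⟫ = ⟪x, y⟫ := by
  simp only [inner_fin_two, perp_apply_zero, perp_apply_one]; ring

lemma inner_perp_comm (x y : E) : ⟪x, perp y⟫ = -⟪y, perp x⟫ := by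
  simp only [inner_fin_two, perp_apply_zero, perp_apply_one]; ring

lemma inner_perp_self (x : E) : ⟪x, perp x⟫ = 0 := by
  simp only [inner_fin_two, perp_apply_zero, perp_apply_one]; ring

lemma norm_perp (p : E) : ‖perp p‖ = ‖p‖ := by
  rw [norm_eq_sqrt_real_inner, norm_eq_sqrt_real_inner, inner_perp_perp]

lemma inner_eq_inner_add_inner_perp {m : E} (hm : ‖m‖ = 1) (x y : E) :
    ⟪x, y⟫ = ⟪x, m⟫ * ⟪y, m⟫ + ⟪x, perp m⟫ * ⟪y, perp m⟫ := by
  have hm' : ⟪m, m⟫ = 1 := by rw [real_inner_self_eq_norm_sq, hm, one_pow]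
  rw [inner_fin_two] at hm'
  simp only [inner_fin_two, perp_apply_zero, perp_apply_one]
  linear_combination (-(x 0 * y 0 + x 1 * y 1)) * hm'

lemma fderiv_apply_self_of_homogeneous {F : Type*} [NormedAddCommGroup F] [NormedSpace ℝ F]
    {f : F → ℝ} (hhom : ∀ l : ℝ, 0 < l → ∀ p : F, f (l • p) = l * f p) {p : F}
    (hp : DifferentiableAt ℝ f p) : fderiv ℝ f p p = f p := by
  have hray : HasDerivAt (fun t : ℝ => f (t • p)) (fderiv ℝ f p p) 1 := by
    have hf : HasFDerivAt f (fderiv ℝ f p) ((1 : ℝ) • p) := by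
      rw [one_smul]; exact hp.hasFDerivAt
    have hline : HasDerivAt (fun t : ℝ => t • p) p 1 := by
      simpa using (hasDerivAt_id (1 : ℝ)).smul_const p
    exact hf.comp_hasDerivAt 1 hline
  have hlin : HasDerivAt (fun t : ℝ => t * f p) (f p) 1 := by
    simpa using (hasDerivAt_id (1 : ℝ)).mul_const (f p)
  refine hray.unique (hlin.congr_of_eventuallyEq ?_)
  filter_upwards [eventually_gt_nhds zero_lt_one] with t ht
  exact hhom t ht p

lemma inner_gradient_self_of_homogeneous {F : Type*} [NormedAddCommGroup F]
    [InnerProductSpace ℝ F] [CompleteSpace F]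
    {f : F → ℝ} (hhom : ∀ l : ℝ, 0 < l → ∀ p : F, f (l • p) = l * f p) {p : F}
    (hp : DifferentiableAt ℝ f p) : ⟪gradient f p, p⟫ = f p := by
  rw [gradient, InnerProductSpace.toDual_symm_apply, fderiv_apply_self_of_homogeneous hhom hp]

lemma mul_apply_inv_smul_of_homogeneous {F : Type*} [AddCommGroup F] [Module ℝ F] {f : F → ℝ}
    (hhom : ∀ l : ℝ, 0 < l → ∀ p : F, f (l • p) = l * f p) {c : ℝ} (hc : 0 < c) (v : F) :
    c * f (c⁻¹ • v) = f v := by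
  rw [← hhom c hc, smul_inv_smul₀ hc.ne']

lemma inner_Zmat_mulVec (γ : E → ℝ) (α : ℝ) (n v w : E) :
    ⟪toE ((Zmat γ α n).mulVec (toV v)), w⟫ = γ n * ⟪v, w⟫ - ⟪n, w⟫ * ⟪gradient γ n, v⟫
      - ⟪gradient γ n, w⟫ * ⟪n, v⟫ + α * ⟪n, v⟫ * ⟪n, w⟫ := by
  simp only [inner_fin_two, toE, toV, WithLp.equiv_symm_apply, Zmat,
    Matrix.mulVec, dotProduct, Fin.sum_univ_two, Matrix.sub_apply, Matrix.add_apply,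
    Matrix.smul_apply, Matrix.vecMulVec_apply, Matrix.one_apply, smul_eq_mul, Fin.isValue,
    ↓reduceIte, zero_ne_one, one_ne_zero, mul_one, mul_zero, zero_sub]
  ring

lemma inner_Zmat_mulVec_smul (γ : E → ℝ) (α : ℝ) (n u v : E) (a b : ℝ) :
    ⟪toE ((Zmat γ α n).mulVec (toV (b • u))), b • u - a • v⟫
      = b ^ 2 * ⟪toE ((Zmat γ α n).mulVec (toV u)), u⟫
        - a * b * ⟪toE ((Zmat γ α n).mulVec (toV u)), v⟫ := by
  simp only [inner_Zmat_mulVec, inner_sub_right, inner_smul_left, inner_smul_right,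
    RCLike.conj_to_real]
  ring

section Zmat

variable {γ : E → ℝ} {n m : E}

lemma inner_Zmat_mulVec_perp_perp_self (hm : ‖m‖ = 1) (heuler : ⟪gradient γ n, n⟫ = γ n)
    (α : ℝ) : ⟪toE ((Zmat γ α n).mulVec (toV (perp m))), perp m⟫
      = -γ n + 2 * ⟪n, m⟫ * ⟪gradient γ n, m⟫ + α * ⟪m, perp n⟫ ^ 2 := by
  have hpm : ⟪perp m, perp m⟫ = 1 := by
    rw [inner_perp_perp, real_inner_self_eq_norm_sq, hm, one_pow]
  have hparseval := inner_eq_inner_add_inner_perp hm (gradient γ n) n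
  rw [inner_Zmat_mulVec, hpm, inner_perp_comm m n]
  linear_combination 2 * hparseval - 2 * heuler

lemma inner_Zmat_mulVec_perp_perp (hn : ‖n‖ = 1) (heuler : ⟪gradient γ n, n⟫ = γ n)
    (α : ℝ) : ⟪toE ((Zmat γ α n).mulVec (toV (perp m))), perp n⟫ = ⟪gradient γ n, m⟫ := by
  have hparseval := inner_eq_inner_add_inner_perp hn (gradient γ n) m
  rw [inner_Zmat_mulVec, inner_perp_perp, inner_perp_self, inner_perp_comm n m]
  linear_combination -⟪m, n⟫ * heuler - hparseval

end Zmat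

lemma mul_two_mul_sqrt_le {a b c B : ℝ} (ha : 0 < a) (hB : 0 ≤ B) (hc : 0 ≤ c) :
    b * (2 * √(B * c)) ≤ b ^ 2 * B / a + a * c := by
  rw [Real.sqrt_mul hB, div_add' _ _ _ ha.ne', le_div_iff₀ ha]
  linear_combination sq_nonneg (b * √B - a * √c) + b ^ 2 * Real.sq_sqrt hB
    + a ^ 2 * Real.sq_sqrt hc

section PQ

variable {γ : E → ℝ} {α : ℝ} {n m : E}

lemma Paux_neg_right : Paux γ α n (-m) = Paux γ α n m := by
  simp only [Paux, inner_neg_left, inner_neg_right, mul_neg, neg_mul, neg_neg, neg_sq]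

lemma Qaux_add_Qaux_neg_right : Qaux γ n m + Qaux γ n (-m) = γ m + γ (-m) := by
  simp only [Qaux, inner_neg_right]; ring

lemma Paux_pos (hm : 0 < γ m) (hm' : 0 < γ (-m)) (hQP : Qaux γ n m ≤ Paux γ α n m)
    (hQP' : Qaux γ n (-m) ≤ Paux γ α n (-m)) : 0 < Paux γ α n m := by
  rw [Paux_neg_right] at hQP'
  linarith [Qaux_add_Qaux_neg_right (γ := γ) (n := n) (m := m)]

lemma sub_le_inner_Zmat_mulVec (hn : ‖n‖ = 1) (hm : ‖m‖ = 1)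
    (heuler : ⟪gradient γ n, n⟫ = γ n) (hγn : 0 < γ n) (hQP : Qaux γ n m ≤ Paux γ α n m)
    (hP : 0 < Paux γ α n m) {a b : ℝ} (ha : 0 < a) (hb : 0 ≤ b) :
    b * γ m - a * γ n
      ≤ 1 / a * ⟪toE ((Zmat γ α n).mulVec (toV (b • perp m))), b • perp m - a • perp n⟫ := by
  set B := -γ n + 2 * ⟪n, m⟫ * ⟪gradient γ n, m⟫ + α * ⟪m, perp n⟫ ^ 2 with hB
  have hPB : Paux γ α n m = 2 * √(B * γ n) := rfl
  have hB0 : 0 ≤ B := by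
    rw [hPB, mul_pos_iff_of_pos_left two_pos, Real.sqrt_pos] at hP
    exact (pos_of_mul_pos_left hP hγn.le).le
  have hZ : 1 / a * ⟪toE ((Zmat γ α n).mulVec (toV (b • perp m))), b • perp m - a • perp n⟫
      = b ^ 2 * B / a - b * ⟪gradient γ n, m⟫ := by
    rw [inner_Zmat_mulVec_smul, inner_Zmat_mulVec_perp_perp_self hm heuler,
      inner_Zmat_mulVec_perp_perp hn heuler]
    field_simp
    rw [hB]
  have hbQP := mul_le_mul_of_nonneg_left hQP hb
  rw [Qaux, hPB] at hbQP
  rw [hZ]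
  linarith [mul_two_mul_sqrt_le (b := b) ha hB0 hγn.le]

end PQ

def unitNormal (h : E) : E := ‖h‖⁻¹ • -perp h

lemma norm_unitNormal {h : E} (hh : h ≠ 0) : ‖unitNormal h‖ = 1 := by
  rw [unitNormal, norm_smul, norm_neg, norm_perp, norm_inv, norm_norm,
    inv_mul_cancel₀ (norm_ne_zero_iff.mpr hh)]

lemma norm_smul_perp_unitNormal {h : E} (hh : h ≠ 0) : ‖h‖ • perp (unitNormal h) = h := by
  rw [unitNormal, perp_smul, perp_neg, perp_perp, neg_neg,
    smul_inv_smul₀ (norm_ne_zero_iff.mpr hh)]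

/-- If P ≥ Q on unit vectors then the discrete stability inequality holds. -/
theorem PQ_implies_stability (γ : E → ℝ)
    (hhom : ∀ l : ℝ, 0 < l → ∀ p : E, γ (l • p) = l * γ p)
    (hdiff : ∀ p : E, p ≠ 0 → DifferentiableAt ℝ γ p)
    (hpos : ∀ n : E, ‖n‖ = 1 → 0 < γ n)
    (k : E → ℝ)
    (hPQ : ∀ n nh : E, ‖n‖ = 1 → ‖nh‖ = 1 → Qaux γ n nh ≤ Paux γ (k n) n nh)
    (h hh : E) (hh0 : h ≠ 0) (hhh0 : hh ≠ 0) :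
    (‖hh‖ * γ (‖hh‖⁻¹ • (-perp hh)) - ‖h‖ * γ (‖h‖⁻¹ • (-perp h))
        ≤ (1 / ‖h‖) * ⟪toE ((Zmat γ (k (‖h‖⁻¹ • (-perp h))) (‖h‖⁻¹ • (-perp h))).mulVec
            (toV hh)), hh - h⟫) ∧
    ‖hh‖ * γ (‖hh‖⁻¹ • (-perp hh)) - ‖h‖ * γ (‖h‖⁻¹ • (-perp h))
        = γ (-perp hh) - γ (-perp h) := by
  have hn := norm_unitNormal hh0
  have hm := norm_unitNormal hhh0
  have hm' : ‖-unitNormal hh‖ = 1 := by rwa [norm_neg]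
  have heuler := inner_gradient_self_of_homogeneous hhom
    (hdiff _ (ne_zero_of_norm_ne_zero (by rw [hn]; exact one_ne_zero)))
  have hP := Paux_pos (hpos _ hm) (hpos _ hm') (hPQ _ _ hn hm) (hPQ _ _ hn hm')
  constructor
  · have key := sub_le_inner_Zmat_mulVec hn hm heuler (hpos _ hn) (hPQ _ _ hn hm) hP
      (norm_pos_iff.mpr hh0) (norm_nonneg hh)
    rwa [norm_smul_perp_unitNormal hh0, norm_smul_perp_unitNormal hhh0] at key
  · rw [mul_apply_inv_smul_of_homogeneous hhom (norm_pos_iff.mpr hhh0),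
      mul_apply_inv_smul_of_homogeneous hhom (norm_pos_iff.mpr hh0)]
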